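/- Let I be a proper ideal of R = C^∞(M,ℝ) of finite codimension. Then the spectrum spec(I) is finite and nonempty, for each y ∈ spec(I) the ideal I + 𝔫_y has spectrum exactly the singleton {y}, and I equals the intersection ⋂_{y ∈ spec(I)} (I + 𝔫_y). -/

import Mathlib

open scoped Manifold
open Module Filter Topology

noncomputable section

/-- The ℝ-algebra of smooth real-valued functions on a manifold `M` modelled on `ℝ^m`. -/
abbrev SmoothFns (m : ℕ) (M : Type*) [TopologicalSpace M]
    [ChartedSpace (EuclideanSpace ℝ (Fin m)) M] : Type _ :=
  C^(⊤ : ℕ∞)⟮𝓡 m, M; 𝓘(ℝ, ℝ), ℝ⟯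

variable {m : ℕ} {M : Type*} [TopologicalSpace M] [T2Space M] [SecondCountableTopology M]
  [ChartedSpace (EuclideanSpace ℝ (Fin m)) M] [IsManifold (𝓡 m) (⊤ : ℕ∞) M]

/-- The ideal `𝔪ₓ` of smooth functions vanishing at the point `x`. -/
def mIdeal (x : M) : Ideal (SmoothFns m M) where
  carrier := {f | f x = 0}
  add_mem' := by intro f g hf hg; simp_all
  zero_mem' := by simp
  smul_mem' := by intro c f hf; simp_all

/-- The ideal `𝔫ₓ` of smooth functions vanishing on some neighbourhood of the point `x`. -/
def nIdeal (x : M) : Ideal (SmoothFns m M) where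
  carrier := {f | ∀ᶠ y in 𝓝 x, f y = 0}
  add_mem' := by
    intro f g hf hg
    filter_upwards [hf, hg] with y h1 h2
    simp [h1, h2]
  zero_mem' := by filter_upwards with y; simp
  smul_mem' := by
    intro c f hf
    filter_upwards [hf] with y h
    simp [h]

/-- The spectrum of an ideal: the set of common zeros of its elements. -/
def idealSpec (I : Ideal (SmoothFns m M)) : Set M :=
  {x : M | ∀ f ∈ I, f x = 0}

/-! Finite codimension makes every `g ∈ R` algebraic modulo `I`: some nonzero polynomial `p`
has `p(g) ∈ I`. For `g` proper, the zero set of `p(g)` lies in the compact set where `g` is at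
most the largest root of `p`; adding squares of finitely many elements of `I` that do not vanish
on the part of it outside a neighbourhood `U` of `spec I` gives `v ∈ I` whose zeros lie in `U`.
A function vanishing near every point of `spec I` is then a multiple of `v`, hence lies in `I`.
Finiteness of `spec I` holds because evaluation `R ⧸ I → ℝˢ` is onto for each finite
`s ⊆ spec I`, and the decomposition follows by gluing, with bump functions separating the
points of `spec I`, local representatives `f = g_y + h_y`, `g_y ∈ I`, `h_y ∈ 𝔫_y`. -/

open Set
open scoped ContDiff

theorem exists_contMDiffMap_isCompact_sublevel {E H N : Type*} [NormedAddCommGroup E]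
    [NormedSpace ℝ E] [FiniteDimensional ℝ E] [TopologicalSpace H] (I : ModelWithCorners ℝ E H)
    [TopologicalSpace N] [ChartedSpace H N] [IsManifold I ∞ N] [T2Space N] [SigmaCompactSpace N]
    {n : ℕ∞} : ∃ g : C^n⟮I, N; 𝓘(ℝ, ℝ), ℝ⟯, ∀ r : ℝ, IsCompact {x | g x ≤ r} := by
  have := I.locallyCompactSpace
  have := ChartedSpace.locallyCompactSpace H N
  let K := CompactExhaustion.choice N
  -- near `x` the constant `K.find x + 1` already dominates `K.find`; a partition of unity
  -- patches these constants into a smooth `g ≥ K.find`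
  obtain ⟨g, hg⟩ := exists_contMDiffMap_forall_mem_convex_of_local_const I (n := n)
    (t := fun x ↦ Ici (K.find x : ℝ)) (fun _ ↦ convex_Ici _) fun x ↦
      ⟨(K.find x + 1 : ℕ), eventually_of_mem (isOpen_interior.mem_nhds
        (K.subset_interior_succ _ (K.mem_find x))) fun y hy ↦
          mem_Ici.2 (Nat.cast_le.2 (K.mem_iff_find_le.1 (interior_subset hy)))⟩
  refine ⟨g, fun r ↦ (K.isCompact ⌈r⌉₊).of_isClosed_subset
    (isClosed_le g.contMDiff.continuous continuous_const) fun x hx ↦ ?_⟩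
  have : (K.find x : ℝ) ≤ ⌈r⌉₊ := ((hg x).trans hx).trans (Nat.le_ceil r)
  exact K.mem_iff_find_le.2 (by exact_mod_cast this)

theorem exists_smoothFns_one_nhds_zero_nhdsSet {s : Set M} (hs : IsClosed s) {x : M}
    (hx : x ∉ s) :
    ∃ f : SmoothFns m M, (∀ᶠ z in 𝓝 x, f z = 1) ∧ ∀ᶠ z in 𝓝ˢ s, f z = 0 := by
  have := ChartedSpace.locallyCompactSpace (EuclideanSpace ℝ (Fin m)) M
  obtain ⟨f, h0, h1, -⟩ := exists_contMDiffMap_zero_one_nhds_of_isClosed (𝓡 m) hs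
    isClosed_singleton (disjoint_singleton_right.2 hx)
  exact ⟨f, by rwa [nhdsSet_singleton] at h1, h0⟩

@[simps!]
def evalAlgHom (x : M) : SmoothFns m M →ₐ[ℝ] ℝ :=
  (Pi.evalAlgHom ℝ (fun _ : M ↦ ℝ) x).comp ContMDiffMap.coeFnAlgHom

theorem exists_smoothFns_eqOn_finset (s : Finset M) (φ : M → ℝ) :
    ∃ f : SmoothFns m M, ∀ x ∈ s, f x = φ x := by
  classical
  have hbump : ∀ x ∈ s, ∃ b : SmoothFns m M, b x = 1 ∧ ∀ y ∈ s, y ≠ x → b y = 0 := by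
    intro x hx
    obtain ⟨b, h1, h0⟩ := exists_smoothFns_one_nhds_zero_nhdsSet (m := m)
      (s.erase x).finite_toSet.isClosed (x := x) (by simp)
    exact ⟨b, h1.self_of_nhds, fun y hy hyx ↦ h0.self_of_nhdsSet y (by simp [hy, hyx])⟩
  choose! b hb1 hb0 using hbump
  refine ⟨∑ x ∈ s, φ x • b x, fun y hy ↦ ?_⟩
  rw [← evalAlgHom_apply, map_sum, Finset.sum_eq_single_of_mem y hy]
  · simp [hb1 y hy]
  · intro x hx hxy
    simp [hb0 x hx y hy (Ne.symm hxy)]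

theorem card_le_finrank_of_subset_idealSpec (I : Ideal (SmoothFns m M))
    [FiniteDimensional ℝ (SmoothFns m M ⧸ I)] (s : Finset M) (hs : ↑s ⊆ idealSpec I) :
    s.card ≤ finrank ℝ (SmoothFns m M ⧸ I) := by
  let ev : SmoothFns m M ⧸ I →ₐ[ℝ] (s → ℝ) := Ideal.Quotient.liftₐ I
    (AlgHom.pi fun x ↦ evalAlgHom x.1) fun f hf ↦ funext fun x ↦ hs x.2 f hf
  have hev : Function.Surjective ev := by
    intro φ
    classical
    obtain ⟨f, hf⟩ := exists_smoothFns_eqOn_finset (m := m) s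
      fun x ↦ if h : x ∈ s then φ ⟨x, h⟩ else 0
    exact ⟨Ideal.Quotient.mk I f, funext fun x ↦ (hf x x.2).trans (dif_pos x.2)⟩
  simpa using LinearMap.finrank_le_finrank_of_surjective (f := ev.toLinearMap) hev

theorem idealSpec_finite (I : Ideal (SmoothFns m M))
    [FiniteDimensional ℝ (SmoothFns m M ⧸ I)] : (idealSpec I).Finite := by
  by_contra hinf
  obtain ⟨s, hs, hcard⟩ := Set.Infinite.exists_subset_card_eq hinf
    (finrank ℝ (SmoothFns m M ⧸ I) + 1)
  have := card_le_finrank_of_subset_idealSpec I s hs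
  omega

theorem exists_mem_isCompact_zeroSet (I : Ideal (SmoothFns m M))
    [FiniteDimensional ℝ (SmoothFns m M ⧸ I)] : ∃ w ∈ I, IsCompact {x | w x = 0} := by
  have := ChartedSpace.locallyCompactSpace (EuclideanSpace ℝ (Fin m)) M
  obtain ⟨g, hg⟩ := exists_contMDiffMap_isCompact_sublevel (𝓡 m) (N := M) (n := ⊤)
  obtain ⟨p, hp0, hp⟩ := Algebra.IsAlgebraic.isAlgebraic (R := ℝ) (Ideal.Quotient.mk I g)
  have hpg : ∀ x, Polynomial.aeval g p x = p.eval (g x) := fun x ↦ by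
    rw [← evalAlgHom_apply, ← Polynomial.aeval_algHom_apply, evalAlgHom_apply,
      Polynomial.coe_aeval_eq_eval]
  obtain ⟨r, hr⟩ := (Polynomial.finite_setOfPred_isRoot hp0).bddAbove
  refine ⟨Polynomial.aeval g p, ?_, (hg r).of_isClosed_subset
    (isClosed_eq (ContMDiffMap.contMDiff _).continuous continuous_const) fun x hx ↦ hr ?_⟩
  · rwa [← Ideal.Quotient.eq_zero_iff_mem, ← Ideal.Quotient.mkₐ_eq_mk ℝ,
      ← Polynomial.aeval_algHom_apply]
  · rwa [mem_ofPred_eq, hpg] at hx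

theorem exists_mem_zeroSet_subset (I : Ideal (SmoothFns m M))
    [FiniteDimensional ℝ (SmoothFns m M ⧸ I)] {U : Set M} (hU : IsOpen U)
    (hspec : idealSpec I ⊆ U) : ∃ v ∈ I, {x | v x = 0} ⊆ U := by
  obtain ⟨w, hwI, hw⟩ := exists_mem_isCompact_zeroSet I
  have hK : IsCompact ({x | w x = 0} \ U) := hw.diff hU
  have hf : ∀ x ∈ {x | w x = 0} \ U, ∃ f ∈ I, f x ≠ 0 := fun x hx ↦ by
    simpa [idealSpec] using fun h ↦ hx.2 (hspec h)
  choose! f hfI hfx using hf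
  obtain ⟨t, htK, hcover⟩ := hK.elim_nhds_subcover (fun x ↦ {y | f x y ≠ 0})
    fun x hx ↦ (isOpen_ne_fun (f x).contMDiff.continuous continuous_const).mem_nhds (hfx x hx)
  refine ⟨w * w + ∑ x ∈ t, f x * f x,
    I.add_mem (I.mul_mem_left w hwI) (I.sum_mem fun x hx ↦ I.mul_mem_left _ (hfI x (htK x hx))),
    fun y hy ↦ ?_⟩
  by_contra hyU
  have hsum : 0 ≤ ∑ x ∈ t, f x y * f x y := Finset.sum_nonneg fun _ _ ↦ mul_self_nonneg _
  have hy' : w y * w y + ∑ x ∈ t, f x y * f x y = 0 := by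
    simpa [← evalAlgHom_apply] using hy
  by_cases hwy : w y = 0
  · obtain ⟨x, hxt, hxy⟩ := mem_iUnion₂.1 (hcover ⟨hwy, hyU⟩)
    have := Finset.sum_pos' (fun x _ ↦ mul_self_nonneg (f x y)) ⟨x, hxt, mul_self_pos.2 hxy⟩
    nlinarith
  · nlinarith [mul_self_pos.2 hwy]

theorem ContMDiffMap.dvd_of_eventually_eq_zero {E H N : Type*} [NormedAddCommGroup E]
    [NormedSpace ℝ E] [TopologicalSpace H] {I : ModelWithCorners ℝ E H} [TopologicalSpace N]
    [ChartedSpace H N] {n : WithTop ℕ∞} {u v : C^n⟮I, N; 𝓘(ℝ, ℝ), ℝ⟯}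
    (h : ∀ x, v x = 0 → ∀ᶠ y in 𝓝 x, u y = 0) : v ∣ u := by
  have hq : ContMDiff I 𝓘(ℝ, ℝ) n fun y ↦ u y / v y := fun x ↦ by
    by_cases hx : v x = 0
    · refine (contMDiffAt_const (c := (0 : ℝ))).congr_of_eventuallyEq ?_
      filter_upwards [h x hx] with y hy
      simp [hy]
    · exact u.contMDiff.contMDiffAt.div₀ v.contMDiff.contMDiffAt hx
  refine ⟨⟨_, hq⟩, ContMDiffMap.ext fun y ↦ ?_⟩
  show u y = v y * (u y / v y)
  by_cases hy : v y = 0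
  · simp [hy, (h y hy).self_of_nhds]
  · rw [mul_div_cancel₀ _ hy]

theorem mem_of_forall_mem_nIdeal (I : Ideal (SmoothFns m M))
    [FiniteDimensional ℝ (SmoothFns m M ⧸ I)] {u : SmoothFns m M}
    (hu : ∀ y ∈ idealSpec I, u ∈ nIdeal y) : u ∈ I := by
  obtain ⟨v, hvI, hv⟩ := exists_mem_zeroSet_subset I isOpen_setOfPred_eventually_nhds hu
  exact I.mem_of_dvd (ContMDiffMap.dvd_of_eventually_eq_zero hv) hvI

theorem idealSpec_nonempty (I : Ideal (SmoothFns m M))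
    [FiniteDimensional ℝ (SmoothFns m M ⧸ I)] (hI : I ≠ ⊤) : (idealSpec I).Nonempty := by
  by_contra h
  exact hI (I.eq_top_of_isUnit_mem
    (mem_of_forall_mem_nIdeal I (u := 1) fun y hy ↦ (h ⟨y, hy⟩).elim) isUnit_one)

theorem idealSpec_add_nIdeal (I : Ideal (SmoothFns m M)) {y : M} (hy : y ∈ idealSpec I) :
    idealSpec (I + nIdeal y) = {y} := by
  refine eq_singleton_iff_unique_mem.2 ⟨fun f hf ↦ ?_, fun z hz ↦ ?_⟩
  · obtain ⟨g, hg, h, hh, rfl⟩ := Submodule.mem_sup.1 hf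
    simp [hy g hg, hh.self_of_nhds]
  · by_contra hzy
    obtain ⟨f, h1, h0⟩ := exists_smoothFns_one_nhds_zero_nhdsSet (m := m) isClosed_singleton
      (mt mem_singleton_iff.1 hzy)
    have hf : f ∈ I + nIdeal y := Submodule.mem_sup_right (by rwa [nhdsSet_singleton] at h0)
    simpa [h1.self_of_nhds] using hz f hf

theorem eq_iInf_add_nIdeal (I : Ideal (SmoothFns m M))
    [FiniteDimensional ℝ (SmoothFns m M ⧸ I)] : I = ⨅ y ∈ idealSpec I, (I + nIdeal y) := by
  classical
  refine le_antisymm (le_iInf₂ fun y _ ↦ le_sup_left) fun f hf ↦ ?_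
  have hfin := idealSpec_finite I
  have hdec : ∀ y ∈ idealSpec I, ∃ g ∈ I, f - g ∈ nIdeal y := fun y hy ↦ by
    obtain ⟨g, hg, h, hh, rfl⟩ :=
      Submodule.mem_sup.1 ((Submodule.mem_iInf _).1 ((Submodule.mem_iInf _).1 hf y) hy)
    exact ⟨g, hg, by rwa [add_sub_cancel_left]⟩
  choose! g hgI hg using hdec
  have hbump : ∀ y ∈ idealSpec I, ∃ χ : SmoothFns m M,
      (∀ᶠ z in 𝓝 y, χ z = 1) ∧ ∀ᶠ z in 𝓝ˢ (idealSpec I \ {y}), χ z = 0 :=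
    fun y _ ↦ exists_smoothFns_one_nhds_zero_nhdsSet (hfin.sdiff).isClosed (by simp)
  choose! χ hχ1 hχ0 using hbump
  set T := hfin.toFinset
  have hglue : ∑ y ∈ T, χ y * g y ∈ I :=
    I.sum_mem fun y hy ↦ I.mul_mem_left _ (hgI y (hfin.mem_toFinset.1 hy))
  suffices f - ∑ y ∈ T, χ y * g y ∈ I by simpa using I.add_mem this hglue
  refine mem_of_forall_mem_nIdeal I fun y hy ↦ ?_
  have hχ0' : ∀ᶠ z in 𝓝 y, ∀ y' ∈ T.erase y, χ y' z = 0 :=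
    (eventually_all_finset _).2 fun y' hy' ↦
      (hχ0 y' (hfin.mem_toFinset.1 (Finset.mem_of_mem_erase hy'))).filter_mono
        (nhds_le_nhdsSet (s := idealSpec I \ {y'}) ⟨hy, Ne.symm (Finset.ne_of_mem_erase hy')⟩)
  filter_upwards [hχ1 y hy, hg y hy, hχ0'] with z h1 hfg h0
  rw [← evalAlgHom_apply, map_sub, map_sum, Finset.sum_eq_single_of_mem y
    (hfin.mem_toFinset.2 hy) fun y' hy' hne ↦ by simp [h0 y' (Finset.mem_erase.2 ⟨hne, hy'⟩)]]
  simpa [h1] using hfg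

theorem spec_finite_and_primary_decomposition
    (I : Ideal (SmoothFns m M)) (hI : I ≠ ⊤)
    (hfd : FiniteDimensional ℝ (SmoothFns m M ⧸ I)) :
    (idealSpec I).Finite ∧ (idealSpec I).Nonempty ∧
      (∀ y ∈ idealSpec I, idealSpec (I + nIdeal y) = {y}) ∧
      I = ⨅ y ∈ idealSpec I, (I + nIdeal y) :=
  ⟨idealSpec_finite I, idealSpec_nonempty I hI, fun _ ↦ idealSpec_add_nIdeal I,
    eq_iInf_add_nIdeal I⟩
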